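/- arXiv:1104.4721 — 8 statements merged into one kernel-verified Lean document; each statement's English description precedes it below -/
import Mathlib

section
/- For every integer n ≥ 0, ∫₀^∞ xⁿ/(x+1) · e^{-x} dx = (-1)ⁿ (∑_{j=0}^{n-1} (-1)^{j+1} j! + δ), where δ = ∫₀^∞ ln(x+1) e^{-x} dx is the Euler–Gompertz constant. -/
/-!
Writing `xⁿ⁺¹ = xⁿ (x + 1) - xⁿ` gives `Iₙ₊₁ + Iₙ = n!` for `Iₙ = ∫₀^∞ xⁿ e^{-x} / (x + 1) dx`,
and integrating by parts against `log (x + 1)` gives `I₀ = δ`; solving this alternating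
recurrence yields the formula.
-/

open MeasureTheory Real Filter Set Finset

theorem eq_neg_one_pow_mul_of_succ_add_eq {R : Type*} [CommRing R] {a f : ℕ → R}
    (h : ∀ n, a (n + 1) + a n = f n) (n : ℕ) :
    a n = (-1) ^ n * (∑ j ∈ range n, (-1) ^ (j + 1) * f j + a 0) := by
  induction n with
  | zero => simp
  | succ n ih =>
    have hsq : (-1 : R) ^ (n + 1) * (-1) ^ (n + 1) = 1 := by rw [← mul_pow]; simp
    rw [sum_range_succ, eq_sub_of_add_eq (h n), ih]
    linear_combination (-f n) * hsq

theorem log_add_one_le_self {x : ℝ} (hx : -1 < x) : log (x + 1) ≤ x := by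
  linarith [log_le_sub_one_of_pos (x := x + 1) (by linarith)]

theorem integrableOn_pow_mul_exp_neg_Ioi (n : ℕ) :
    IntegrableOn (fun x : ℝ => x ^ n * exp (-x)) (Ioi 0) := by
  refine (GammaIntegral_convergent (s := n + 1) (by positivity)).congr_fun (fun x _ => ?_)
    measurableSet_Ioi
  simp only [add_sub_cancel_right, rpow_natCast, mul_comm]

theorem integral_pow_mul_exp_neg_Ioi (n : ℕ) :
    ∫ x in Ioi (0 : ℝ), x ^ n * exp (-x) = n.factorial := by
  rw [← Gamma_nat_eq_factorial, Gamma_eq_integral (by positivity)]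
  refine setIntegral_congr_fun measurableSet_Ioi (fun x _ => ?_)
  rw [add_sub_cancel_right, rpow_natCast, mul_comm]

theorem integrableOn_pow_div_add_one_mul_exp_neg_Ioi (n : ℕ) :
    IntegrableOn (fun x : ℝ => x ^ n / (x + 1) * exp (-x)) (Ioi 0) := by
  refine (integrableOn_pow_mul_exp_neg_Ioi n).mono' ?_ ?_
  · refine ContinuousOn.aestronglyMeasurable ?_ measurableSet_Ioi
    exact ((continuousOn_pow n).div (by fun_prop)
      fun x (hx : 0 < x) => by positivity).mul (by fun_prop)
  · filter_upwards [ae_restrict_mem measurableSet_Ioi] with x (hx : 0 < x)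
    rw [norm_of_nonneg (by positivity)]
    gcongr
    exact div_le_self (by positivity) (by linarith)

theorem integrableOn_log_add_one_mul_exp_neg_Ioi :
    IntegrableOn (fun x : ℝ => log (x + 1) * exp (-x)) (Ioi 0) := by
  refine (integrableOn_pow_mul_exp_neg_Ioi 1).mono' ?_ ?_
  · refine ContinuousOn.aestronglyMeasurable ?_ measurableSet_Ioi
    exact (ContinuousOn.log (by fun_prop) fun x (hx : 0 < x) => by positivity).mul
      (by fun_prop)
  · filter_upwards [ae_restrict_mem measurableSet_Ioi] with x (hx : 0 < x)
    rw [norm_of_nonneg (mul_nonneg (log_nonneg (by linarith)) (exp_pos _).le), pow_one]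
    gcongr
    exact log_add_one_le_self (by linarith)

theorem tendsto_log_add_one_mul_exp_neg_atTop :
    Tendsto (fun x : ℝ => log (x + 1) * exp (-x)) atTop (nhds 0) := by
  refine tendsto_of_tendsto_of_tendsto_of_le_of_le' tendsto_const_nhds
    (by simpa using tendsto_pow_mul_exp_neg_atTop_nhds_zero 1) ?_ ?_
  · filter_upwards [eventually_ge_atTop (0 : ℝ)] with x hx
    exact mul_nonneg (log_nonneg (by linarith)) (exp_pos _).le
  · filter_upwards [eventually_ge_atTop (0 : ℝ)] with x hx
    gcongr
    exact log_add_one_le_self (by linarith)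

theorem integral_one_div_add_one_mul_exp_neg_Ioi :
    ∫ x in Ioi (0 : ℝ), 1 / (x + 1) * exp (-x) = ∫ x in Ioi (0 : ℝ), log (x + 1) * exp (-x) := by
  have hinv : IntegrableOn (fun x : ℝ => 1 / (x + 1) * exp (-x)) (Ioi 0) := by
    simpa using integrableOn_pow_div_add_one_mul_exp_neg_Ioi 0
  have hderiv : ∀ x ∈ Ici (0 : ℝ), HasDerivAt (fun x => -(log (x + 1) * exp (-x)))
      (log (x + 1) * exp (-x) - 1 / (x + 1) * exp (-x)) x := by
    intro x (hx : 0 ≤ x)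
    have hlog : HasDerivAt (fun x : ℝ => log (x + 1)) (1 / (x + 1)) x := by
      simpa using ((hasDerivAt_id x).add_const 1).log (by positivity)
    have hexp : HasDerivAt (fun x : ℝ => exp (-x)) (-exp (-x)) x := by
      simpa using (hasDerivAt_id x).neg.exp
    exact (hlog.mul hexp).neg.congr_deriv (by ring)
  have hftc := integral_Ioi_of_hasDerivAt_of_tendsto' hderiv
    (integrableOn_log_add_one_mul_exp_neg_Ioi.sub hinv)
    (by simpa using tendsto_log_add_one_mul_exp_neg_atTop.neg)
  rw [integral_sub integrableOn_log_add_one_mul_exp_neg_Ioi hinv] at hftc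
  simp only [zero_add, log_one, zero_mul, neg_zero, sub_zero] at hftc
  linarith

theorem integral_pow_succ_div_add_one_mul_exp_neg_Ioi_add (n : ℕ) :
    (∫ x in Ioi (0 : ℝ), x ^ (n + 1) / (x + 1) * exp (-x)) +
      ∫ x in Ioi (0 : ℝ), x ^ n / (x + 1) * exp (-x) = n.factorial := by
  rw [← integral_add (integrableOn_pow_div_add_one_mul_exp_neg_Ioi _)
    (integrableOn_pow_div_add_one_mul_exp_neg_Ioi n), ← integral_pow_mul_exp_neg_Ioi n]
  refine setIntegral_congr_fun measurableSet_Ioi (fun x (hx : 0 < x) => ?_)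
  field_simp
  ring

theorem stmt0 (n : ℕ) :
    ∫ x in Set.Ioi (0:ℝ), x ^ n / (x + 1) * Real.exp (-x) =
      (-1 : ℝ) ^ n *
        ((∑ j ∈ Finset.range n, (-1 : ℝ) ^ (j + 1) * (Nat.factorial j : ℝ)) +
          ∫ x in Set.Ioi (0:ℝ), Real.log (x + 1) * Real.exp (-x)) := by
  rw [eq_neg_one_pow_mul_of_succ_add_eq (a := fun n => ∫ x in Ioi (0 : ℝ), x ^ n / (x + 1) * exp (-x))
    integral_pow_succ_div_add_one_mul_exp_neg_Ioi_add n]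
  simpa using integral_one_div_add_one_mul_exp_neg_Ioi
end

section
/- For all integers m ≥ j ≥ r ≥ 0 with m > r, ∑_{k=j}^{m} C(m,k) C(k,r) (-1)^k = C(m,j) C(j,r) · (j-r)/(m-r) · (-1)^j. -/
/-!
Telescoping. With `F k = C(m,k) C(k,r) (k - r) (-1)^k`, the two absorption identities
`C(m,k+1) (k+1) = C(m,k) (m-k)` and `C(k,r) (k+1) = C(k+1,r) (k+1-r)` give
`(m - r) C(m,k) C(k,r) (-1)^k = F k - F (k+1)`, so the sum over `j ≤ k ≤ m` is
`(F j - F (m+1)) / (m - r)`, and `F (m+1) = 0`.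
-/

namespace Nat

variable {R : Type*} [CommRing R]

theorem cast_choose_succ_right_mul (n k : ℕ) :
    (n.choose (k + 1) : R) * (k + 1) = n.choose k * (n - k) := by
  rcases le_or_gt k n with hkn | hnk
  · have := congrArg (Nat.cast (R := R)) (choose_succ_right_eq n k)
    push_cast [cast_sub hkn] at this
    exact this
  · simp [choose_eq_zero_of_lt hnk, choose_eq_zero_of_lt (hnk.trans (lt_succ_self k))]

theorem cast_choose_mul_succ (n k : ℕ) :
    (n.choose k : R) * (n + 1) = (n + 1).choose k * (n + 1 - k) := by
  rcases le_or_gt k (n + 1) with hkn | hnk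
  · have := congrArg (Nat.cast (R := R)) (choose_mul_succ_eq n k)
    push_cast [cast_sub hkn] at this
    exact this
  · simp [choose_eq_zero_of_lt hnk, choose_eq_zero_of_lt (lt_of_succ_lt hnk)]

theorem cast_choose_mul_choose_mul_neg_one_pow_mul_sub (m r k : ℕ) :
    (m.choose k * k.choose r * (-1) ^ k : R) * (m - r) =
      m.choose k * k.choose r * ((k : R) - r) * (-1) ^ k -
        m.choose (k + 1) * (k + 1).choose r * (((k + 1 : ℕ) : R) - r) * (-1) ^ (k + 1) := by
  have hm := cast_choose_succ_right_mul (R := R) m k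
  have hk := cast_choose_mul_succ (R := R) k r
  push_cast
  linear_combination (-1 : R) ^ k * ((m.choose (k + 1) : R) * hk - (k.choose r : R) * hm)

end Nat

theorem stmt2_general (m j r : ℕ) (hjm : j ≤ m) (hrm : r < m) :
    ∑ k ∈ Finset.Icc j m, (m.choose k : ℚ) * (k.choose r : ℚ) * (-1 : ℚ) ^ k =
      (m.choose j : ℚ) * (j.choose r : ℚ) * (((j : ℚ) - r) / ((m : ℚ) - r)) * (-1 : ℚ) ^ j := by
  have hmr : (m : ℚ) - r ≠ 0 := sub_ne_zero.mpr (by exact_mod_cast hrm.ne')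
  set F : ℕ → ℚ := fun k ↦ m.choose k * k.choose r * ((k : ℚ) - r) * (-1) ^ k
  have hFm : F (m + 1) = 0 := by simp [F, Nat.choose_succ_self]
  calc ∑ k ∈ Finset.Icc j m, (m.choose k : ℚ) * (k.choose r : ℚ) * (-1 : ℚ) ^ k
      = (∑ k ∈ Finset.Icc j m, -(F (k + 1) - F k)) / (m - r) := by
        rw [Finset.sum_div]
        refine Finset.sum_congr rfl fun k _ ↦ ?_
        rw [eq_div_iff hmr, Nat.cast_choose_mul_choose_mul_neg_one_pow_mul_sub]
        ring
    _ = F j / (m - r) := by rw [Finset.sum_neg_distrib, Finset.sum_Icc_sub hjm, hFm]; ring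
    _ = _ := by ring

theorem stmt2 (m j r : ℕ) (hrj : r ≤ j) (hjm : j ≤ m) (hrm : r < m) :
    ∑ k ∈ Finset.Icc j m, (m.choose k : ℚ) * (k.choose r : ℚ) * (-1 : ℚ) ^ k =
      (m.choose j : ℚ) * (j.choose r : ℚ) * (((j : ℚ) - r) / ((m : ℚ) - r)) * (-1 : ℚ) ^ j :=
  stmt2_general m j r hjm hrm
end

section
/- The limit as ε → -1⁺ of (1/Γ(1+ε)) ∫₀^∞ x^{ε-1} ln(xu+1) e^{-x} dx equals u, for every real u ≥ 0. -/
/-!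
Since `log (1 + t) = t + O(t²)` for `t ≥ 0`, the integral equals
`u Γ(1 + ε) + O(u² Γ(2 + ε))`. Dividing by `Γ(1 + ε)` and using
`Γ(2 + ε) = (1 + ε) Γ(1 + ε)`, the error is `O(u² (1 + ε))`, which vanishes as `ε → -1`.
-/

open MeasureTheory Real Filter

open Set Topology

lemma abs_log_add_one_sub_le_sq {t : ℝ} (ht : 0 ≤ t) : |log (t + 1) - t| ≤ t ^ 2 := by
  have hpos : 0 < t + 1 := by linarith
  have hupper : log (t + 1) ≤ t := by linarith [log_le_sub_one_of_pos hpos]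
  have hlower : 1 - (t + 1)⁻¹ ≤ log (t + 1) := one_sub_inv_le_log_of_pos hpos
  have hinv : t - t ^ 2 ≤ 1 - (t + 1)⁻¹ := by
    rw [← sub_nonneg]
    have : 1 - (t + 1)⁻¹ - (t - t ^ 2) = t ^ 3 / (t + 1) := by field_simp; ring
    rw [this]; positivity
  rw [abs_le]
  constructor <;> nlinarith

lemma integrableOn_rpow_mul_exp_neg {s : ℝ} (hs : -1 < s) :
    IntegrableOn (fun x : ℝ => x ^ s * exp (-x)) (Ioi 0) := by
  simpa only [add_sub_cancel_right, mul_comm] using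
    GammaIntegral_convergent (s := s + 1) (by linarith)

lemma integral_rpow_mul_exp_neg {s : ℝ} (hs : -1 < s) :
    ∫ x in Ioi 0, x ^ s * exp (-x) = Gamma (1 + s) := by
  simp only [Gamma_eq_integral (show 0 < 1 + s by linarith), add_sub_cancel_left, mul_comm]

lemma abs_integral_rpow_mul_exp_neg_sub_le {f : ℝ → ℝ} {s c K : ℝ} (hs : -1 < s)
    (hf : AEStronglyMeasurable f (volume.restrict (Ioi 0)))
    (hfc : ∀ x > 0, |f x - c * x| ≤ K * x ^ 2) :
    |(∫ x in Ioi 0, x ^ (s - 1) * f x * exp (-x)) - c * Gamma (1 + s)| ≤ K * Gamma (2 + s) := by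
  set g : ℝ → ℝ := fun x => x ^ (s - 1) * (f x - c * x) * exp (-x)
  have hg_le : ∀ x ∈ Ioi (0 : ℝ), ‖g x‖ ≤ K * (x ^ (1 + s) * exp (-x)) := by
    intro x (hx : 0 < x)
    have hpow : x ^ (s - 1) * x ^ 2 = x ^ (1 + s) := by
      rw [← rpow_natCast, ← rpow_add hx]; norm_num; ring_nf
    calc ‖g x‖ = x ^ (s - 1) * |f x - c * x| * exp (-x) := by
          simp only [g, norm_mul, norm_eq_abs, abs_of_pos (rpow_pos_of_pos hx _), abs_exp]
      _ ≤ x ^ (s - 1) * (K * x ^ 2) * exp (-x) := by gcongr; exact hfc x hx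
      _ = K * (x ^ (1 + s) * exp (-x)) := by rw [← hpow]; ring
  have hg_int : IntegrableOn g (Ioi 0) := by
    refine ((integrableOn_rpow_mul_exp_neg (s := 1 + s) (by linarith)).const_mul K).mono' ?_ ?_
    · exact ((by fun_prop : Measurable fun x : ℝ => x ^ (s - 1)).aestronglyMeasurable.mul
        (hf.sub (by fun_prop))).mul (by fun_prop)
    · exact (ae_restrict_iff' measurableSet_Ioi).2 (.of_forall hg_le)
  have hsplit : ∫ x in Ioi 0, x ^ (s - 1) * f x * exp (-x) =
      c * Gamma (1 + s) + ∫ x in Ioi 0, g x := by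
    rw [← integral_rpow_mul_exp_neg hs, ← integral_const_mul,
      ← integral_add ((integrableOn_rpow_mul_exp_neg hs).const_mul c) hg_int]
    refine setIntegral_congr_fun measurableSet_Ioi fun x (hx : 0 < x) => ?_
    have hpow : x ^ (s - 1) * x = x ^ s := by rw [← rpow_add_one hx.ne']; ring_nf
    simp only [g]; rw [← hpow]; ring
  rw [hsplit, add_sub_cancel_left, ← norm_eq_abs,
    show 2 + s = 1 + (1 + s) by ring, ← integral_rpow_mul_exp_neg (by linarith),
    ← integral_const_mul]
  exact norm_integral_le_of_norm_le ((integrableOn_rpow_mul_exp_neg (by linarith)).const_mul K)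
    ((ae_restrict_iff' measurableSet_Ioi).2 (.of_forall hg_le))

theorem tendsto_div_Gamma_mul_integral_rpow_mul_exp_neg {f : ℝ → ℝ} {c K : ℝ}
    (hf : AEStronglyMeasurable f (volume.restrict (Ioi 0)))
    (hfc : ∀ x > 0, |f x - c * x| ≤ K * x ^ 2) :
    Tendsto (fun s : ℝ => 1 / Gamma (1 + s) * ∫ x in Ioi 0, x ^ (s - 1) * f x * exp (-x))
      (𝓝[>] (-1)) (𝓝 c) := by
  have hbound : ∀ s > (-1 : ℝ),
      |1 / Gamma (1 + s) * (∫ x in Ioi 0, x ^ (s - 1) * f x * exp (-x)) - c| ≤ K * (1 + s) := by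
    intro s hs
    have hΓ : 0 < Gamma (1 + s) := Gamma_pos_of_pos (by linarith)
    have hΓ2 : Gamma (2 + s) = (1 + s) * Gamma (1 + s) := by
      rw [← Gamma_add_one (by linarith)]; ring_nf
    calc _ = |(∫ x in Ioi 0, x ^ (s - 1) * f x * exp (-x)) - c * Gamma (1 + s)|
          / Gamma (1 + s) := by
          rw [← abs_of_pos hΓ, ← abs_div, abs_of_pos hΓ]; congr 1; field_simp
      _ ≤ K * Gamma (2 + s) / Gamma (1 + s) := by
          gcongr; exact abs_integral_rpow_mul_exp_neg_sub_le hs hf hfc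
      _ = K * (1 + s) := by rw [hΓ2]; field_simp
  have hlim : Tendsto (fun s : ℝ => K * (1 + s)) (𝓝[>] (-1)) (𝓝 0) := by
    simpa using ((continuous_const.mul (continuous_const.add continuous_id)).tendsto
      (-1 : ℝ)).mono_left nhdsWithin_le_nhds (f := fun s : ℝ => K * (1 + s))
  refine tendsto_sub_nhds_zero_iff.1 (squeeze_zero_norm' ?_ hlim)
  filter_upwards [self_mem_nhdsWithin] with s hs using hbound s hs

theorem stmt6 (u : ℝ) (hu : 0 ≤ u) :
    Tendsto
      (fun ε : ℝ =>
        (1 / Real.Gamma (1 + ε)) *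
          ∫ x in Set.Ioi (0:ℝ), x ^ (ε - 1) * Real.log (x * u + 1) * Real.exp (-x))
      (nhdsWithin (-1) (Set.Ioo (-1 : ℝ) 0)) (nhds u) := by
  have hlog : ∀ x > (0 : ℝ), |log (x * u + 1) - u * x| ≤ u ^ 2 * x ^ 2 := fun x hx => by
    simpa only [mul_comm u, mul_pow, mul_comm (x ^ 2)] using
      abs_log_add_one_sub_le_sq (mul_nonneg hx.le hu)
  exact (tendsto_div_Gamma_mul_integral_rpow_mul_exp_neg
    (by fun_prop : Measurable fun x => log (x * u + 1)).aestronglyMeasurable hlog).mono_left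
    (nhdsWithin_mono _ Ioo_subset_Ioi_self)
end

section
/- For every real u > 0 and integer m ≥ 2, the m-th derivative of f(u) = ∫₀^∞ x^{ε-1} ln(xu+1) e^{-x} dx (with fixed real ε ∈ (-1,-1/2)) satisfies f^{(m)}(u) · u^m = (-1)^{m+1} (m-1)! ∫₀^∞ x^{ε-1} e^{-x} (xu/(xu+1))^m dx. -/
/-!
Differentiation under the integral sign is justified by domination with the Gamma integrands
`x ^ (ε + k - 1) * exp (-x)`, integrable because `ε > -1`. With `t = x / (x * u + 1)` one has
`∂ᵤ log (x * u + 1) = t` and `∂ᵤ t = -t ^ 2`, hence `∂ᵤ tⁿ = -n tⁿ⁺¹`, and induction gives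
`f⁽ᵐ⁾(u) = (-1) ^ (m + 1) (m - 1)! ∫ x ^ (ε - 1) exp (-x) tᵐ`; finally `u t = x u / (x u + 1)`.
-/

open MeasureTheory Real Set Filter Topology

noncomputable def logIntegral (e w : ℝ) : ℝ :=
  ∫ x in Ioi 0, x ^ (e - 1) * log (x * w + 1) * exp (-x)

noncomputable def ratioIntegral (e : ℝ) (n : ℕ) (w : ℝ) : ℝ :=
  ∫ x in Ioi 0, x ^ (e - 1) * exp (-x) * (x / (x * w + 1)) ^ n

lemma rpow_sub_one_mul_pow {x : ℝ} (hx : 0 < x) (e : ℝ) (k : ℕ) :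
    x ^ (e - 1) * x ^ k = x ^ (e + k - 1) := by
  rw [← rpow_natCast, ← rpow_add hx]
  ring_nf

lemma ratio_integrand_le {e x w : ℝ} (hx : 0 < x) (hw : 0 ≤ w) (k : ℕ) :
    x ^ (e - 1) * exp (-x) * (x / (x * w + 1)) ^ k ≤ exp (-x) * x ^ (e + k - 1) :=
  calc _ ≤ x ^ (e - 1) * exp (-x) * x ^ k := by
        gcongr
        exact div_le_self hx.le (by nlinarith)
    _ = _ := by rw [mul_right_comm, rpow_sub_one_mul_pow hx, mul_comm]

lemma log_integrand_le {e x w : ℝ} (hx : 0 < x) (hw : 0 ≤ w) :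
    x ^ (e - 1) * log (x * w + 1) * exp (-x) ≤ w * (exp (-x) * x ^ (e + (1 : ℕ) - 1)) :=
  calc _ ≤ x ^ (e - 1) * (x * w) * exp (-x) := by
        gcongr
        linarith [log_le_sub_one_of_pos (by positivity : 0 < x * w + 1)]
    _ = _ := by rw [← rpow_sub_one_mul_pow hx]; ring

lemma integrableOn_ratio_integrand {e : ℝ} {n : ℕ} (hn : 0 < e + n) {w : ℝ} (hw : 0 ≤ w) :
    IntegrableOn (fun x => x ^ (e - 1) * exp (-x) * (x / (x * w + 1)) ^ n) (Ioi 0) :=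
  (GammaIntegral_convergent hn).mono' (by fun_prop) <|
    ae_restrict_of_forall_mem measurableSet_Ioi fun x (hx : 0 < x) => by
      rw [norm_of_nonneg (by positivity)]
      exact ratio_integrand_le hx hw n

lemma integrableOn_log_integrand {e : ℝ} (he : -1 < e) {w : ℝ} (hw : 0 ≤ w) :
    IntegrableOn (fun x => x ^ (e - 1) * log (x * w + 1) * exp (-x)) (Ioi 0) :=
  ((GammaIntegral_convergent (s := e + (1 : ℕ)) (by push_cast; linarith)).const_mul w).mono'
    (by fun_prop) <|
    ae_restrict_of_forall_mem measurableSet_Ioi fun x (hx : 0 < x) => by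
      rw [norm_of_nonneg (mul_nonneg (mul_nonneg (by positivity)
        (log_nonneg (by nlinarith))) (exp_pos _).le)]
      exact log_integrand_le hx hw

lemma hasDerivAt_log_mul_add_one {x w : ℝ} (h : x * w + 1 ≠ 0) :
    HasDerivAt (fun w => log (x * w + 1)) (x / (x * w + 1)) w := by
  simpa using (((hasDerivAt_id w).const_mul x).add_const 1).log h

lemma hasDerivAt_div_mul_add_one {x w : ℝ} (h : x * w + 1 ≠ 0) :
    HasDerivAt (fun w => x / (x * w + 1)) (-(x / (x * w + 1)) ^ 2) w := by
  have hden := ((hasDerivAt_id' w).const_mul x).add_const 1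
  refine ((hasDerivAt_const w x).div hden h).congr_deriv ?_
  rw [div_pow]
  ring

lemma hasDerivAt_div_mul_add_one_pow {x w : ℝ} (h : x * w + 1 ≠ 0) (n : ℕ) :
    HasDerivAt (fun w => (x / (x * w + 1)) ^ n) (-n * (x / (x * w + 1)) ^ (n + 1)) w := by
  refine ((hasDerivAt_div_mul_add_one h).pow n).congr_deriv ?_
  rcases n with _ | n
  · simp
  · rw [Nat.add_sub_cancel]
    ring

lemma hasDerivAt_logIntegral {e : ℝ} (he : -1 < e) {v : ℝ} (hv : 0 < v) :
    HasDerivAt (logIntegral e) (ratioIntegral e 1 v) v := by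
  refine (hasDerivAt_integral_of_dominated_loc_of_deriv_le (μ := volume.restrict (Ioi 0))
    (F := fun w x => x ^ (e - 1) * log (x * w + 1) * exp (-x))
    (F' := fun w x => x ^ (e - 1) * exp (-x) * (x / (x * w + 1)) ^ 1) (x₀ := v)
    (bound := fun x => exp (-x) * x ^ (e + (1 : ℕ) - 1)) (isOpen_Ioi.mem_nhds hv)
    (Eventually.of_forall fun w => by fun_prop) (integrableOn_log_integrand he hv.le)
    (by fun_prop) ?_ (GammaIntegral_convergent (by push_cast; linarith)) ?_).2
  · refine ae_restrict_of_forall_mem measurableSet_Ioi fun x (hx : 0 < x) w (hw : 0 < w) => ?_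
    rw [norm_of_nonneg (by positivity)]
    exact ratio_integrand_le hx hw.le 1
  · refine ae_restrict_of_forall_mem measurableSet_Ioi fun x (hx : 0 < x) w (hw : 0 < w) => ?_
    refine (((hasDerivAt_log_mul_add_one (x := x) (w := w) (by positivity)).const_mul
      (x ^ (e - 1))).mul_const (exp (-x))).congr_deriv ?_
    ring

lemma hasDerivAt_ratioIntegral {e : ℝ} {n : ℕ} (hn : 0 < e + n) {v : ℝ} (hv : 0 < v) :
    HasDerivAt (ratioIntegral e n) (-n * ratioIntegral e (n + 1) v) v := by
  rw [ratioIntegral, ← integral_const_mul]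
  refine (hasDerivAt_integral_of_dominated_loc_of_deriv_le (μ := volume.restrict (Ioi 0))
    (F := fun w x => x ^ (e - 1) * exp (-x) * (x / (x * w + 1)) ^ n)
    (F' := fun w x => -n * (x ^ (e - 1) * exp (-x) * (x / (x * w + 1)) ^ (n + 1))) (x₀ := v)
    (bound := fun x => n * (exp (-x) * x ^ (e + (n + 1 : ℕ) - 1))) (isOpen_Ioi.mem_nhds hv)
    (Eventually.of_forall fun w => by fun_prop) (integrableOn_ratio_integrand hn hv.le)
    (by fun_prop) ?_ ((GammaIntegral_convergent (by push_cast; linarith)).const_mul _) ?_).2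
  · refine ae_restrict_of_forall_mem measurableSet_Ioi fun x (hx : 0 < x) w (hw : 0 < w) => ?_
    rw [norm_mul, norm_neg, Real.norm_natCast, norm_of_nonneg (by positivity)]
    exact mul_le_mul_of_nonneg_left (ratio_integrand_le hx hw.le (n + 1)) n.cast_nonneg
  · refine ae_restrict_of_forall_mem measurableSet_Ioi fun x (hx : 0 < x) w (hw : 0 < w) => ?_
    refine ((hasDerivAt_div_mul_add_one_pow (x := x) (w := w) (by positivity) n).const_mul
      (x ^ (e - 1) * exp (-x))).congr_deriv ?_
    ring

lemma iteratedDeriv_succ_logIntegral {e : ℝ} (he : -1 < e) (n : ℕ) {v : ℝ} (hv : 0 < v) :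
    iteratedDeriv (n + 1) (logIntegral e) v
      = (-1) ^ n * n.factorial * ratioIntegral e (n + 1) v := by
  induction n generalizing v with
  | zero => simpa using (hasDerivAt_logIntegral he hv).deriv
  | succ n ih =>
    have hpos : 0 < e + (n + 1 : ℕ) := by push_cast; linarith [n.cast_nonneg (α := ℝ)]
    have hloc : iteratedDeriv (n + 1) (logIntegral e)
        =ᶠ[𝓝 v] fun w => (-1) ^ n * n.factorial * ratioIntegral e (n + 1) w :=
      eventually_of_mem (isOpen_Ioi.mem_nhds hv) fun w hw => ih hw
    rw [iteratedDeriv_succ, hloc.deriv_eq,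
      ((hasDerivAt_ratioIntegral hpos hv).const_mul _).deriv, Nat.factorial_succ]
    push_cast
    ring

lemma integral_mul_div_pow_eq (e u : ℝ) (m : ℕ) :
    ∫ x in Ioi 0, x ^ (e - 1) * exp (-x) * (x * u / (x * u + 1)) ^ m
      = u ^ m * ratioIntegral e m u := by
  rw [ratioIntegral, ← integral_const_mul]
  congr 1 with x
  ring

theorem stmt7 (ε : ℝ) (hε : ε ∈ Set.Ioo (-1 : ℝ) (-1/2)) (u : ℝ) (hu : 0 < u)
    (m : ℕ) (hm : 2 ≤ m) :
    iteratedDeriv m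
        (fun v : ℝ => ∫ x in Set.Ioi (0:ℝ), x ^ (ε - 1) * Real.log (x * v + 1) * Real.exp (-x))
        u * u ^ m =
      (-1 : ℝ) ^ (m + 1) * (Nat.factorial (m - 1) : ℝ) *
        ∫ x in Set.Ioi (0:ℝ), x ^ (ε - 1) * Real.exp (-x) * (x * u / (x * u + 1)) ^ m := by
  obtain ⟨k, rfl⟩ : ∃ k, m = k + 1 := ⟨m - 1, by omega⟩
  change iteratedDeriv (k + 1) (logIntegral ε) u * u ^ (k + 1) = _
  rw [iteratedDeriv_succ_logIntegral hε.1 k hu, integral_mul_div_pow_eq, Nat.add_sub_cancel]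
  ring
end

section
/- For every integer m ≥ 4 and reals u > 0, ε ∈ (-1,-1/2), setting T = √m, one has ∫₀^T x^{ε-1} e^{-x} (1 + 1/(xu))^{-m} dx < u² T^{2+ε} (1 + 1/(Tu))^{2-m}. -/
open MeasureTheory Real

theorem stmt9 (m : ℕ) (hm : 4 ≤ m) (u : ℝ) (hu : 0 < u)
    (ε : ℝ) (hε : ε ∈ Set.Ioo (-1 : ℝ) (-1/2)) :
    ∫ x in Set.Ioo (0 : ℝ) (Real.sqrt m),
        x ^ (ε - 1) * Real.exp (-x) * (1 + 1 / (x * u)) ^ (-(m : ℤ)) <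
      u ^ 2 * Real.sqrt m ^ (2 + ε) * (1 + 1 / (Real.sqrt m * u)) ^ ((2 : ℤ) - m) := by
  obtain ⟨hε1, hε2⟩ := hε
  set T : ℝ := Real.sqrt m with hTdef
  have hT : 0 < T := Real.sqrt_pos.2 (by positivity)
  set k : ℕ := m - 2 with hk
  have hkm : (k : ℤ) = (m : ℤ) - 2 := by omega
  have hC : (1 + 1 / (T * u)) ^ ((2 : ℤ) - m) = ((1 + 1 / (T * u)) ^ k)⁻¹ := by
    rw [show ((2:ℤ) - m) = -(k:ℤ) by omega, zpow_neg, zpow_natCast]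
  set C : ℝ := ((1 + 1 / (T * u)) ^ k)⁻¹ with hCdef
  have hb : (0:ℝ) < 1 + 1 / (T * u) := by positivity
  have hCpos : 0 < C := by positivity
  -- pointwise bound
  have key : ∀ x ∈ Set.Ioo (0:ℝ) T,
      x ^ (ε - 1) * Real.exp (-x) * (1 + 1 / (x * u)) ^ (-(m : ℤ))
        ≤ u ^ 2 * C * x ^ (ε + 1) := by
    intro x ⟨hx0, hxT⟩
    have hxu : 0 < x * u := by positivity
    have ha : (0:ℝ) < 1 + 1 / (x * u) := by positivity
    have hsplit : (1 + 1 / (x * u)) ^ (-(m : ℤ))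
        = ((1 + 1 / (x * u)) ^ 2)⁻¹ * ((1 + 1 / (x * u)) ^ k)⁻¹ := by
      rw [← mul_inv, ← pow_add, show 2 + k = m by omega, ← zpow_natCast, ← zpow_neg]
    have h1 : ((1 + 1 / (x * u)) ^ 2)⁻¹ ≤ (x * u) ^ 2 := by
      have h1a : (1 / (x * u)) ≤ 1 + 1 / (x * u) := by linarith
      have := inv_anti₀ (by positivity) (pow_le_pow_left₀ (by positivity) h1a 2)
      calc ((1 + 1 / (x * u)) ^ 2)⁻¹ ≤ ((1 / (x * u)) ^ 2)⁻¹ := this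
        _ = (x * u) ^ 2 := by rw [div_pow, one_pow, one_div, inv_inv]
    have h2 : ((1 + 1 / (x * u)) ^ k)⁻¹ ≤ C := by
      apply inv_anti₀ (by positivity)
      apply pow_le_pow_left₀ hb.le
      have : 1 / (T * u) ≤ 1 / (x * u) :=
        one_div_le_one_div_of_le hxu (by nlinarith)
      linarith
    have hexp : Real.exp (-x) ≤ 1 := Real.exp_le_one_iff.2 (by linarith)
    have hbnd : (1 + 1 / (x * u)) ^ (-(m : ℤ)) ≤ (x * u) ^ 2 * C := by
      rw [hsplit]
      exact mul_le_mul h1 h2 (by positivity) (by positivity)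
    calc x ^ (ε - 1) * Real.exp (-x) * (1 + 1 / (x * u)) ^ (-(m : ℤ))
        ≤ x ^ (ε - 1) * 1 * ((x * u) ^ 2 * C) := by
          apply mul_le_mul
          · exact mul_le_mul_of_nonneg_left hexp (by positivity)
          · exact hbnd
          · positivity
          · positivity
      _ = u ^ 2 * C * (x ^ (ε - 1) * x ^ (2:ℝ)) := by
          rw [Real.rpow_two]; ring
      _ = u ^ 2 * C * x ^ (ε + 1) := by
          rw [← Real.rpow_add hx0]; ring_nf
  -- integrability of the dominating function
  have hint : IntegrableOn (fun x => u ^ 2 * C * x ^ (ε + 1)) (Set.Ioo 0 T) := by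
    apply Integrable.const_mul
    have : IntervalIntegrable (fun x : ℝ => x ^ (ε + 1)) volume 0 T := by
      apply intervalIntegral.intervalIntegrable_rpow'
      linarith
    exact this.1.mono_set Set.Ioo_subset_Ioc_self
  have hmono : ∫ x in Set.Ioo (0:ℝ) T,
        x ^ (ε - 1) * Real.exp (-x) * (1 + 1 / (x * u)) ^ (-(m : ℤ))
      ≤ ∫ x in Set.Ioo (0:ℝ) T, u ^ 2 * C * x ^ (ε + 1) := by
    apply integral_mono_of_nonneg _ hint
    · exact (ae_restrict_iff' measurableSet_Ioo).2 (Filter.Eventually.of_forall key)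
    · exact (ae_restrict_iff' measurableSet_Ioo).2 (Filter.Eventually.of_forall
        fun x hx => by have hx0 : 0 < x := hx.1; positivity)
  have hval : ∫ x in Set.Ioo (0:ℝ) T, u ^ 2 * C * x ^ (ε + 1)
      = u ^ 2 * C * (T ^ (ε + 2) / (ε + 2)) := by
    rw [← integral_Ioc_eq_integral_Ioo, ← intervalIntegral.integral_of_le hT.le,
      intervalIntegral.integral_const_mul, integral_rpow (Or.inl (by linarith))]
    rw [Real.zero_rpow (by linarith)]
    ring_nf
  have hfin : u ^ 2 * C * (T ^ (ε + 2) / (ε + 2)) < u ^ 2 * T ^ (2 + ε) * C := by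
    have hTp : (0:ℝ) < T ^ (ε + 2) := Real.rpow_pos_of_pos hT _
    have : T ^ (ε + 2) / (ε + 2) < T ^ (ε + 2) := div_lt_self hTp (by linarith)
    calc u ^ 2 * C * (T ^ (ε + 2) / (ε + 2)) < u ^ 2 * C * T ^ (ε + 2) := by
          exact mul_lt_mul_of_pos_left this (by positivity)
      _ = u ^ 2 * T ^ (2 + ε) * C := by rw [show ε + 2 = 2 + ε by ring]; ring
  rw [hC]
  calc _ ≤ ∫ x in Set.Ioo (0:ℝ) T, u ^ 2 * C * x ^ (ε + 1) := hmono
    _ = u ^ 2 * C * (T ^ (ε + 2) / (ε + 2)) := hval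
    _ < u ^ 2 * T ^ (2 + ε) * C := hfin
end

section
/- Fix integer r ≥ 1 and define A_m(r) = ∑_{j=1}^{m} ((-1)^j/(j-1)!) ∑_{k=j}^{m} C(m,k) C(k-1,r-1) (-1)^k. Then A_m(r) + A_m(r+1) = ∑_{j=1}^{m} C(m,j) C(j,r) · (j-r)/(m-r) · 1/(j-1)! for every m > r. -/
/-!
Pascal's rule `C(k-1, r-1) + C(k-1, r) = C(k, r)` merges the inner sums of `A_m(r)` and
`A_m(r+1)` into the tails `∑_{k ≥ j} C(m,k) C(k,r) (-1)^k`. These telescope: the summand is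
`g k - g (k+1)` for `g j = (-1)^j C(m,j) C(j,r) (j-r)/(m-r)`, a consequence of
`C(m,k+1) (k+1) = C(m,k) (m-k)` and `C(k,r) (k+1) = C(k+1,r) (k+1-r)`, and `g (m+1) = 0`.
The sign `(-1)^j` of the tail then cancels the outer sign.
-/

/-- `A_m(r)` from the paper. -/
noncomputable def A (m r : ℕ) : ℚ :=
  ∑ j ∈ Finset.Icc 1 m, ((-1 : ℚ) ^ j / (Nat.factorial (j - 1) : ℚ)) *
    ∑ k ∈ Finset.Icc j m, (m.choose k : ℚ) * ((k - 1).choose (r - 1) : ℚ) * (-1 : ℚ) ^ k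

open Finset

theorem Nat.choose_succ_mul_choose_succ_mul_sub (m k r : ℕ) :
    m.choose (k + 1) * ((k + 1).choose r * (k + 1 - r)) = k.choose r * (m.choose k * (m - k)) := by
  rw [← Nat.choose_mul_succ_eq, ← Nat.choose_succ_right_eq]
  ring

-- Truncated subtraction is harmless here: the binomial coefficient vanishes when `n < k`.
theorem Nat.cast_choose_mul_sub {R : Type*} [Ring R] (n k : ℕ) :
    (n.choose k : R) * ((n : R) - k) = ((n.choose k * (n - k) : ℕ) : R) := by
  rcases le_or_gt k n with h | h
  · push_cast [Nat.cast_sub h]; rfl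
  · simp [Nat.choose_eq_zero_of_lt h]

theorem sum_Icc_choose_mul_choose_mul_neg_one_pow {K : Type*} [Field K] [CharZero K]
    {r m j : ℕ} (hrm : r < m) (hjm : j ≤ m) :
    ∑ k ∈ Icc j m, (m.choose k : K) * k.choose r * (-1) ^ k =
      (-1) ^ j * m.choose j * j.choose r * (((j : K) - r) / ((m : K) - r)) := by
  set g : ℕ → K := fun j ↦ (-1) ^ j * m.choose j * j.choose r * (((j : K) - r) / ((m : K) - r))
  have hmr : (m : K) - r ≠ 0 := sub_ne_zero.2 (by exact_mod_cast hrm.ne')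
  have hstep (k : ℕ) : (m.choose k : K) * k.choose r * (-1) ^ k = g k - g (k + 1) := by
    have hchoose : (m.choose (k + 1) : K) * ((k + 1).choose r * ((k + 1 : ℕ) - r)) =
        k.choose r * (m.choose k * ((m : K) - k)) := by
      rw [Nat.cast_choose_mul_sub, Nat.cast_choose_mul_sub]
      exact_mod_cast Nat.choose_succ_mul_choose_succ_mul_sub m k r
    push_cast at hchoose
    simp only [g, Nat.cast_add, Nat.cast_one]
    field_simp
    linear_combination -(-1) ^ k * hchoose
  have hg : g (m + 1) = 0 := by simp [g]
  calc ∑ k ∈ Icc j m, (m.choose k : K) * k.choose r * (-1) ^ k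
      = -∑ k ∈ Icc j m, (g (k + 1) - g k) := by
        rw [← sum_neg_distrib]; exact sum_congr rfl fun k _ ↦ by rw [hstep, neg_sub]
    _ = g j := by rw [sum_Icc_sub hjm, hg]; ring

theorem A_add_A_succ {r : ℕ} (m : ℕ) (hr : 1 ≤ r) :
    A m r + A m (r + 1) = ∑ j ∈ Icc 1 m, ((-1 : ℚ) ^ j / (j - 1).factorial) *
      ∑ k ∈ Icc j m, (m.choose k : ℚ) * k.choose r * (-1) ^ k := by
  unfold A
  rw [← sum_add_distrib]
  refine sum_congr rfl fun j hj ↦ ?_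
  rw [← mul_add, ← sum_add_distrib]
  congr 1
  refine sum_congr rfl fun k hk ↦ ?_
  have hk : 0 < k := by simp only [mem_Icc] at hj hk; omega
  rw [Nat.choose_eq_choose_pred_add hk hr, Nat.add_sub_cancel]
  push_cast
  ring

theorem stmt14 (r m : ℕ) (hr : 1 ≤ r) (hm : r < m) :
    A m r + A m (r + 1) =
      ∑ j ∈ Finset.Icc 1 m,
        (m.choose j : ℚ) * (j.choose r : ℚ) * (((j : ℚ) - r) / ((m : ℚ) - r)) *
          (1 / (Nat.factorial (j - 1) : ℚ)) := by
  rw [A_add_A_succ m hr]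
  refine sum_congr rfl fun j hj ↦ ?_
  rw [sum_Icc_choose_mul_choose_mul_neg_one_pow hm (mem_Icc.1 hj).2]
  have hsign : ((-1 : ℚ) ^ j) ^ 2 = 1 := by rw [← pow_mul, pow_mul', neg_one_sq, one_pow]
  field_simp
  rw [hsign, one_mul]
end

section
/- For every real u ≥ 0 and ε ∈ (-1,-1/2), defining f_ε(u) = (1/Γ(ε+1)) ∫₀^∞ x^{ε-1} e^{-x} ln(xu+1) dx, one has for every integer j ≥ 1 (with r = 0): f_{ε+j}(u) = [binom(ε+j, j)]^{-1} ∑_{i=0}^{j} binom(ε+j-1, j-i) (u^i/i!) f_ε^{(i)}(u). -/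
open MeasureTheory Real

/-- Generalized binomial coefficient `x(x-1)⋯(x-n+1)/n!` for real `x`. -/
noncomputable def rbinom (x : ℝ) (n : ℕ) : ℝ :=
  (∏ k ∈ Finset.range n, (x - k)) / (Nat.factorial n : ℝ)

/-- `f_e(u) = (1/Γ(e+1)) ∫₀^∞ x^{e-1} e^{-x} ln(xu+1) dx`. -/
noncomputable def f (e : ℝ) (u : ℝ) : ℝ :=
  (1 / Real.Gamma (e + 1)) *
    ∫ x in Set.Ioi (0:ℝ), x ^ (e - 1) * Real.exp (-x) * Real.log (x * u + 1)

/-!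
Integration by parts in `x` gives `(e + 1) f_{e+1} = (e + u d/du) f_e` for `e > -1` and `u > 0`,
so `f_{ε+j}` is obtained from `f_ε` by applying the operators `(ε + m + u d/du) / (ε + m + 1)`,
`m < j`. The operator `x + u d/du` sends `∑_{i ≤ k} binom(x-1, k-i) u^i/i! g^{(i)}` to
`(k + 1) ∑_{i ≤ k+1} binom(x, k+1-i) u^i/i! g^{(i)}`: since `u d/du (u^i/i! g^{(i)})` is
`i u^i/i! g^{(i)} + (i+1) u^{i+1}/(i+1)! g^{(i+1)}`, this reduces to Pascal's rule and absorption
for `binom`. Smoothness of `f_ε` on `(0, ∞)` comes from differentiating under the integral sign: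
its derivatives are multiples of `∫ x^{ε+i} e^{-x} (xu + 1)^{-(i+1)} dx`.
At `u = 0` both sides vanish.
-/

open Finset

lemma rbinom_zero (x : ℝ) : rbinom x 0 = 1 := by simp [rbinom]

lemma succ_mul_rbinom_succ (x : ℝ) (n : ℕ) :
    (n + 1) * rbinom x (n + 1) = (x - n) * rbinom x n := by
  simp only [rbinom, prod_range_succ, Nat.factorial_succ, Nat.cast_mul]
  field_simp
  push_cast
  ring

lemma succ_mul_rbinom_succ_eq_mul_rbinom_sub_one (x : ℝ) (n : ℕ) :
    (n + 1) * rbinom x (n + 1) = x * rbinom (x - 1) n := by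
  have hshift : ∏ m ∈ range n, (x - ↑(m + 1)) = ∏ m ∈ range n, (x - 1 - m) := by
    push_cast; simp only [sub_add_eq_sub_sub, sub_right_comm]
  simp only [rbinom, prod_range_succ', Nat.factorial_succ, Nat.cast_mul, hshift]
  field_simp
  push_cast
  ring

lemma rbinom_pos {x : ℝ} {n : ℕ} (h : (n : ℝ) - 1 < x) : 0 < rbinom x n := by
  refine div_pos (prod_pos fun m hm => ?_) (by positivity)
  have : (m : ℝ) + 1 ≤ n := by exact_mod_cast mem_range.1 hm
  linarith

lemma add_mul_rbinom_sub_one (x : ℝ) (n i : ℕ) :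
    (x + i) * rbinom (x - 1) n + i * rbinom (x - 1) (n + 1) = (n + i + 1) * rbinom x (n + 1) := by
  have habs := succ_mul_rbinom_succ_eq_mul_rbinom_sub_one x n
  have hsucc := succ_mul_rbinom_succ (x - 1) n
  refine mul_left_cancel₀ (show (n : ℝ) + 1 ≠ 0 by positivity) ?_
  linear_combination i * hsucc - (n + i + 1) * habs

lemma sum_range_rbinom_sub_one_mul (x : ℝ) (k : ℕ) (a : ℕ → ℝ) :
    ∑ i ∈ range (k + 1), rbinom (x - 1) (k - i) * ((x + i) * a i + (i + 1) * a (i + 1)) =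
      (k + 1) * ∑ i ∈ range (k + 2), rbinom x (k + 1 - i) * a i := by
  -- over `antidiagonal` the index shifts below involve no truncated subtraction
  rw [← Nat.sum_antidiagonal_eq_sum_range_succ
      (fun i n => rbinom (x - 1) n * ((x + i) * a i + (i + 1) * a (i + 1))),
    ← Nat.sum_antidiagonal_eq_sum_range_succ (fun i n => rbinom x n * a i), mul_sum]
  have hweight : ∀ p ∈ antidiagonal (k + 1), ((k : ℝ) + 1) * (rbinom x p.2 * a p.1) =
      p.2 * rbinom x p.2 * a p.1 + p.1 * rbinom x p.2 * a p.1 := by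
    intro p hp
    have hk : (k : ℝ) + 1 = p.1 + p.2 := by exact_mod_cast (mem_antidiagonal.1 hp).symm
    rw [hk]
    ring
  have hshift : ∑ p ∈ antidiagonal k, rbinom (x - 1) p.2 * ((p.1 + 1) * a (p.1 + 1)) =
      (k + 1) * a (k + 1) + ∑ p ∈ antidiagonal k, rbinom (x - 1) (p.2 + 1) * (p.1 * a p.1) := by
    have h := (Nat.sum_antidiagonal_succ
      (f := fun p => rbinom (x - 1) p.2 * (p.1 * a p.1))).symm.trans
        (Nat.sum_antidiagonal_succ' (n := k))
    simpa [rbinom_zero] using h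
  have hterm : ∑ p ∈ antidiagonal k, rbinom (x - 1) p.2 * ((x + p.1) * a p.1) +
      ∑ p ∈ antidiagonal k, rbinom (x - 1) (p.2 + 1) * (p.1 * a p.1) =
      ∑ p ∈ antidiagonal k, (p.2 + 1) * rbinom x (p.2 + 1) * a p.1 +
        ∑ p ∈ antidiagonal k, p.1 * rbinom x (p.2 + 1) * a p.1 := by
    simp only [← sum_add_distrib]
    exact sum_congr rfl fun p _ => by linear_combination a p.1 * add_mul_rbinom_sub_one x p.2 p.1
  rw [sum_congr rfl hweight, sum_add_distrib, Nat.sum_antidiagonal_succ',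
    Nat.sum_antidiagonal_succ']
  simp only [mul_add, sum_add_distrib, rbinom_zero]
  push_cast
  linear_combination hshift + hterm

noncomputable def taylorTerm (g : ℝ → ℝ) (i : ℕ) (u : ℝ) : ℝ :=
  u ^ i / i.factorial * iteratedDeriv i g u

noncomputable def binomialDerivSum (x : ℝ) (k : ℕ) (g : ℝ → ℝ) (u : ℝ) : ℝ :=
  ∑ i ∈ range (k + 1), rbinom (x - 1) (k - i) * taylorTerm g i u

section
variable {g : ℝ → ℝ} {i : ℕ} {u : ℝ}

lemma hasDerivAt_taylorTerm (hg : DifferentiableAt ℝ (iteratedDeriv i g) u) :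
    HasDerivAt (taylorTerm g i)
      (i * u ^ (i - 1) / i.factorial * iteratedDeriv i g u +
        u ^ i / i.factorial * iteratedDeriv (i + 1) g u) u := by
  rw [iteratedDeriv_succ]
  exact ((hasDerivAt_pow i u).div_const _).mul hg.hasDerivAt

lemma mul_deriv_taylorTerm (hg : DifferentiableAt ℝ (iteratedDeriv i g) u) :
    u * deriv (taylorTerm g i) u = i * taylorTerm g i u + (i + 1) * taylorTerm g (i + 1) u := by
  rw [(hasDerivAt_taylorTerm hg).deriv, taylorTerm, taylorTerm]
  rcases i with _ | i
  · simp
  · simp only [Nat.factorial_succ, Nat.cast_mul, pow_succ, Nat.add_sub_cancel]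
    field_simp
    push_cast
    ring

end

lemma binomialDerivSum_euler (x : ℝ) (k : ℕ) {g : ℝ → ℝ} {u : ℝ}
    (hg : ∀ i ≤ k, DifferentiableAt ℝ (iteratedDeriv i g) u) :
    x * binomialDerivSum x k g u + u * deriv (binomialDerivSum x k g) u =
      (k + 1) * binomialDerivSum (x + 1) (k + 1) g u := by
  have hdiff : ∀ i ∈ range (k + 1), DifferentiableAt ℝ (taylorTerm g i) u := fun i hi =>
    (hasDerivAt_taylorTerm (hg i (Nat.lt_succ_iff.1 (mem_range.1 hi)))).differentiableAt
  have hderiv : deriv (binomialDerivSum x k g) u =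
      ∑ i ∈ range (k + 1), rbinom (x - 1) (k - i) * deriv (taylorTerm g i) u := by
    unfold binomialDerivSum
    rw [deriv_fun_sum fun i hi => (hdiff i hi).const_mul _]
    simp only [deriv_const_mul_field']
  rw [hderiv, binomialDerivSum, binomialDerivSum, add_sub_cancel_right,
    ← sum_range_rbinom_sub_one_mul, mul_sum, mul_sum, ← sum_add_distrib]
  refine sum_congr rfl fun i hi => ?_
  rw [mul_left_comm u, mul_deriv_taylorTerm (hg i (Nat.lt_succ_iff.1 (mem_range.1 hi)))]
  ring

open Set Filter Topology

noncomputable def gammaTransform (a : ℝ) (ψ : ℝ → ℝ) (u : ℝ) : ℝ :=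
  ∫ x in Ioi (0 : ℝ), x ^ (a - 1) * exp (-x) * ψ (x * u)

lemma gammaTransform_const_mul (a c : ℝ) (ψ : ℝ → ℝ) (u : ℝ) :
    gammaTransform a (fun y => c * ψ y) u = c * gammaTransform a ψ u := by
  rw [gammaTransform, gammaTransform, ← integral_const_mul]
  congr 1 with x
  ring

lemma integrableOn_rpow_mul_exp_neg_mul {a b C : ℝ} {φ : ℝ → ℝ} (hab : 0 < a + b)
    (hφ : Measurable φ) (hbound : ∀ x > 0, |φ x| ≤ C * x ^ b) :
    IntegrableOn (fun x => x ^ (a - 1) * exp (-x) * φ x) (Ioi 0) := by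
  refine ((GammaIntegral_convergent hab).const_mul C).mono'
    (by fun_prop : Measurable fun x : ℝ => x ^ (a - 1) * exp (-x) * φ x).aestronglyMeasurable ?_
  filter_upwards [ae_restrict_mem measurableSet_Ioi] with x (hx : 0 < x)
  rw [norm_mul, norm_mul, norm_of_nonneg (rpow_nonneg hx.le _), norm_of_nonneg (exp_pos _).le,
    norm_eq_abs, show a + b - 1 = (a - 1) + b by ring, rpow_add hx]
  calc x ^ (a - 1) * exp (-x) * |φ x| ≤ x ^ (a - 1) * exp (-x) * (C * x ^ b) := by
        gcongr; exact hbound x hx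
    _ = C * (exp (-x) * (x ^ (a - 1) * x ^ b)) := by ring

lemma hasDerivAt_gammaTransform {a u C : ℝ} {ψ ψ' : ℝ → ℝ} (ha : -1 < a) (hu : 0 < u)
    (hψ : Measurable ψ) (hψ' : Measurable ψ') (hderiv : ∀ y > 0, HasDerivAt ψ (ψ' y) y)
    (hbound : ∀ y > 0, |ψ' y| ≤ C)
    (hint : IntegrableOn (fun x => x ^ (a - 1) * exp (-x) * ψ (x * u)) (Ioi 0)) :
    HasDerivAt (gammaTransform a ψ) (gammaTransform (a + 1) ψ' u) u := by
  have hbound' : ∀ᵐ x ∂(volume.restrict (Ioi 0)), ∀ t ∈ Ioi (0 : ℝ),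
      ‖x ^ (a - 1) * exp (-x) * (ψ' (x * t) * x)‖ ≤ C * (exp (-x) * x ^ (a + 1 - 1)) := by
    filter_upwards [ae_restrict_mem measurableSet_Ioi] with x (hx : 0 < x) t (ht : 0 < t)
    rw [norm_mul, norm_mul, norm_mul, norm_of_nonneg (rpow_nonneg hx.le _),
      norm_of_nonneg (exp_pos _).le, norm_of_nonneg hx.le, norm_eq_abs, add_sub_cancel_right,
      rpow_sub_one hx.ne']
    calc x ^ a / x * exp (-x) * (|ψ' (x * t)| * x) ≤ x ^ a / x * exp (-x) * (C * x) := by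
          gcongr; exact hbound _ (mul_pos hx ht)
      _ = C * (exp (-x) * x ^ a) := by field_simp
  have hdiff : ∀ᵐ x ∂(volume.restrict (Ioi 0)), ∀ t ∈ Ioi (0 : ℝ),
      HasDerivAt (fun t => x ^ (a - 1) * exp (-x) * ψ (x * t))
        (x ^ (a - 1) * exp (-x) * (ψ' (x * t) * x)) t := by
    filter_upwards [ae_restrict_mem measurableSet_Ioi] with x (hx : 0 < x) t (ht : 0 < t)
    exact ((hderiv _ (mul_pos hx ht)).comp t (hasDerivAt_const_mul x)).const_mul _
  have key := hasDerivAt_integral_of_dominated_loc_of_deriv_le (Ioi_mem_nhds hu)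
    (Eventually.of_forall fun t => (by fun_prop :
      Measurable fun x : ℝ => x ^ (a - 1) * exp (-x) * ψ (x * t)).aestronglyMeasurable)
    hint (by fun_prop :
      Measurable fun x : ℝ => x ^ (a - 1) * exp (-x) * (ψ' (x * u) * x)).aestronglyMeasurable
    hbound' ((GammaIntegral_convergent (by linarith)).const_mul C) hdiff
  refine key.2.congr_deriv (setIntegral_congr_fun measurableSet_Ioi fun x (hx : 0 < x) => ?_)
  rw [add_sub_cancel_right, rpow_sub_one hx.ne']
  field_simp

lemma integrableOn_rpow_mul_exp_neg_mul_log {e u : ℝ} (he : -1 < e) (hu : 0 ≤ u) :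
    IntegrableOn (fun x => x ^ (e - 1) * exp (-x) * log (x * u + 1)) (Ioi 0) := by
  refine integrableOn_rpow_mul_exp_neg_mul (b := 1) (C := u) (by linarith) (by fun_prop)
    fun x (hx : 0 < x) => ?_
  have hxu : 0 ≤ x * u := mul_nonneg hx.le hu
  rw [rpow_one, abs_of_nonneg (log_nonneg (by linarith))]
  linarith [log_le_sub_one_of_pos (show 0 < x * u + 1 by linarith)]

lemma integrableOn_rpow_mul_exp_neg_mul_inv_pow {a u : ℝ} (ha : 0 < a) (hu : 0 ≤ u) (m : ℕ) :
    IntegrableOn (fun x => x ^ (a - 1) * exp (-x) * ((x * u + 1) ^ m)⁻¹) (Ioi 0) := by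
  refine integrableOn_rpow_mul_exp_neg_mul (b := 0) (C := 1) (by linarith) (by fun_prop)
    fun x (hx : 0 < x) => ?_
  have hxu : 0 ≤ x * u := mul_nonneg hx.le hu
  rw [rpow_zero, mul_one, abs_inv, abs_of_pos (by positivity)]
  exact inv_le_one_of_one_le₀ (one_le_pow₀ (by linarith))

lemma hasDerivAt_gammaTransform_log {e u : ℝ} (he : -1 < e) (hu : 0 < u) :
    HasDerivAt (gammaTransform e fun y => log (y + 1))
      (gammaTransform (e + 1) (fun y => (y + 1)⁻¹) u) u :=
  hasDerivAt_gammaTransform (C := 1) he hu (by fun_prop) (by fun_prop)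
    (fun y hy => by simpa using ((hasDerivAt_id' y).add_const 1).log (by positivity))
    (fun y hy => by
      rw [abs_inv, abs_of_pos (by linarith)]
      exact inv_le_one_of_one_le₀ (by linarith))
    (integrableOn_rpow_mul_exp_neg_mul_log he hu.le)

lemma hasDerivAt_inv_add_one_pow (m : ℕ) {y : ℝ} (hy : 0 < y + 1) :
    HasDerivAt (fun y => ((y + 1) ^ m)⁻¹) (-m * ((y + 1) ^ (m + 1))⁻¹) y := by
  refine ((((hasDerivAt_id' y).add_const 1).fun_pow m).fun_inv (by positivity)).congr_deriv ?_
  rcases m with _ | m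
  · simp
  · rw [Nat.add_sub_cancel]
    field_simp
    ring

lemma hasDerivAt_gammaTransform_inv_pow {a u : ℝ} (ha : 0 < a) (hu : 0 < u) (m : ℕ) :
    HasDerivAt (gammaTransform a fun y => ((y + 1) ^ m)⁻¹)
      (-m * gammaTransform (a + 1) (fun y => ((y + 1) ^ (m + 1))⁻¹) u) u := by
  rw [← gammaTransform_const_mul]
  refine hasDerivAt_gammaTransform (C := m) (by linarith) hu (by fun_prop) (by fun_prop)
    (fun y hy => hasDerivAt_inv_add_one_pow m (by linarith)) (fun y hy => ?_)
    (integrableOn_rpow_mul_exp_neg_mul_inv_pow ha hu.le m)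
  rw [abs_mul, abs_neg, Nat.abs_cast, abs_inv, abs_of_pos (by positivity)]
  exact mul_le_of_le_one_right (by positivity)
    (inv_le_one_of_one_le₀ (one_le_pow₀ (by linarith)))

lemma gammaTransform_add_one_log {e u : ℝ} (he : -1 < e) (hu : 0 ≤ u) :
    gammaTransform (e + 1) (fun y => log (y + 1)) u =
      e * gammaTransform e (fun y => log (y + 1)) u +
        u * gammaTransform (e + 1) (fun y => (y + 1)⁻¹) u := by
  have hlog (e : ℝ) (he : -1 < e) := integrableOn_rpow_mul_exp_neg_mul_log he hu
  have hinv :=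
    (integrableOn_rpow_mul_exp_neg_mul_inv_pow (a := e + 1) (by linarith) hu 1).const_mul u
  have hbound : ∀ x > 0, 0 ≤ x ^ e * exp (-x) * log (x * u + 1) ∧
      x ^ e * exp (-x) * log (x * u + 1) ≤ u * (x ^ (e + 1) * exp (-x)) := by
    intro x hx
    have hxu : 0 ≤ x * u := mul_nonneg hx.le hu
    have hlog := log_le_sub_one_of_pos (show 0 < x * u + 1 by linarith)
    have hpos : 0 ≤ x ^ e * exp (-x) := by positivity
    refine ⟨mul_nonneg hpos (log_nonneg (by linarith)), ?_⟩
    calc x ^ e * exp (-x) * log (x * u + 1) ≤ x ^ e * exp (-x) * (x * u) := by gcongr; linarith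
      _ = u * (x ^ (e + 1) * exp (-x)) := by rw [rpow_add_one hx.ne']; ring
  have h_zero : Tendsto (fun x => x ^ e * exp (-x) * log (x * u + 1)) (𝓝[>] 0) (𝓝 0) := by
    have hcont : ContinuousAt (fun x => u * (x ^ (e + 1) * exp (-x))) 0 := by
      fun_prop (disch := right; linarith)
    have h0 : Tendsto (fun x => u * (x ^ (e + 1) * exp (-x))) (𝓝[>] 0) (𝓝 0) := by
      simpa [zero_rpow (show e + 1 ≠ 0 by linarith)] using
        hcont.tendsto.mono_left nhdsWithin_le_nhds
    refine squeeze_zero' ?_ ?_ h0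
    · filter_upwards [self_mem_nhdsWithin] with x hx using (hbound x hx).1
    · filter_upwards [self_mem_nhdsWithin] with x hx using (hbound x hx).2
  have h_infty : Tendsto (fun x => x ^ e * exp (-x) * log (x * u + 1)) atTop (𝓝 0) := by
    have := (tendsto_rpow_mul_exp_neg_mul_atTop_nhds_zero (e + 1) 1 one_pos).const_mul u
    refine squeeze_zero' ?_ ?_ (by simpa using this)
    · filter_upwards [Ioi_mem_atTop 0] with x hx using (hbound x hx).1
    · filter_upwards [Ioi_mem_atTop 0] with x hx using (hbound x hx).2
  have key := integral_Ioi_mul_deriv_eq_deriv_mul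
    (u := fun x => x ^ e * exp (-x)) (u' := fun x => e * x ^ (e - 1) * exp (-x) - x ^ e * exp (-x))
    (v := fun x => log (x * u + 1)) (v' := fun x => u / (x * u + 1))
    (fun x (hx : 0 < x) => ((hasDerivAt_rpow_const (Or.inl hx.ne')).mul
      (hasDerivAt_neg' x).exp).congr_deriv (by ring))
    (fun x (hx : 0 < x) => by
      simpa using ((hasDerivAt_mul_const u).add_const 1).log (by positivity))
    (IntegrableOn.congr_fun hinv (fun x (hx : 0 < x) => by simp [div_eq_mul_inv]; ring)
      measurableSet_Ioi)
    (IntegrableOn.congr_fun (((hlog e he).const_mul e).sub (hlog (e + 1) (by linarith)))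
      (fun x (hx : 0 < x) => by simp; ring) measurableSet_Ioi)
    h_zero h_infty
  have hUV' : ∫ x in Ioi 0, x ^ e * exp (-x) * (u / (x * u + 1)) =
      u * gammaTransform (e + 1) (fun y => (y + 1)⁻¹) u := by
    rw [gammaTransform, ← integral_const_mul, add_sub_cancel_right]
    congr 1 with x
    ring
  have hU'V : ∫ x in Ioi 0, (e * x ^ (e - 1) * exp (-x) - x ^ e * exp (-x)) * log (x * u + 1) =
      e * gammaTransform e (fun y => log (y + 1)) u -
        gammaTransform (e + 1) (fun y => log (y + 1)) u := by
    rw [gammaTransform, gammaTransform, ← integral_const_mul,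
      ← integral_sub ((hlog e he).const_mul e) (hlog (e + 1) (by linarith)), add_sub_cancel_right]
    congr 1 with x
    ring
  linarith

lemma f_eq_gammaTransform (e u : ℝ) :
    f e u = 1 / Gamma (e + 1) * gammaTransform e (fun y => log (y + 1)) u := rfl

lemma f_apply_zero (e : ℝ) : f e 0 = 0 := by simp [f]

lemma hasDerivAt_f {e u : ℝ} (he : -1 < e) (hu : 0 < u) :
    HasDerivAt (f e) (1 / Gamma (e + 1) * gammaTransform (e + 1) (fun y => (y + 1)⁻¹) u) u :=
  (hasDerivAt_gammaTransform_log he hu).const_mul _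

lemma add_one_mul_f_add_one {e u : ℝ} (he : -1 < e) (hu : 0 < u) :
    (e + 1) * f (e + 1) u = e * f e u + u * deriv (f e) u := by
  have he1 : e + 1 ≠ 0 := by linarith
  have hΓ : Gamma (e + 1) ≠ 0 := (Gamma_pos_of_pos (by linarith)).ne'
  rw [(hasDerivAt_f he hu).deriv, f_eq_gammaTransform, f_eq_gammaTransform,
    gammaTransform_add_one_log he hu.le, Gamma_add_one (by linarith)]
  field_simp

lemma exists_eqOn_iteratedDeriv_succ_f {e : ℝ} (he : -1 < e) (i : ℕ) :
    ∃ c : ℝ, EqOn (iteratedDeriv (i + 1) (f e))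
      (fun u => c * gammaTransform (e + 1 + i) (fun y => ((y + 1) ^ (i + 1))⁻¹) u) (Ioi 0) := by
  induction i with
  | zero => exact ⟨_, fun u hu => by simpa using (hasDerivAt_f he hu).deriv⟩
  | succ i ih =>
    obtain ⟨c, hc⟩ := ih
    refine ⟨c * -(i + 1), fun u (hu : 0 < u) => ?_⟩
    have ha : 0 < e + 1 + i := by linarith [i.cast_nonneg (α := ℝ)]
    have hd := (hasDerivAt_gammaTransform_inv_pow ha hu (i + 1)).const_mul c
    rw [iteratedDeriv_succ, (hc.eventuallyEq_of_mem (Ioi_mem_nhds hu)).deriv_eq, hd.deriv]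
    push_cast
    ring_nf

lemma differentiableAt_iteratedDeriv_f {e u : ℝ} (he : -1 < e) (hu : 0 < u) (i : ℕ) :
    DifferentiableAt ℝ (iteratedDeriv i (f e)) u := by
  rcases i with _ | i
  · exact (hasDerivAt_f he hu).differentiableAt
  · obtain ⟨c, hc⟩ := exists_eqOn_iteratedDeriv_succ_f he i
    have ha : 0 < e + 1 + i := by linarith [i.cast_nonneg (α := ℝ)]
    exact ((hasDerivAt_gammaTransform_inv_pow ha hu (i + 1)).differentiableAt.const_mul
      c).congr_of_eventuallyEq (hc.eventuallyEq_of_mem (Ioi_mem_nhds hu))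

lemma eqOn_f_add_nat {ε : ℝ} (hε : -1 < ε) (k : ℕ) :
    EqOn (f (ε + k)) (fun u => (rbinom (ε + k) k)⁻¹ * binomialDerivSum (ε + k) k (f ε) u)
      (Ioi 0) := by
  induction k with
  | zero => intro u _; simp [binomialDerivSum, taylorTerm, rbinom_zero]
  | succ k ih =>
    intro u (hu : 0 < u)
    have he : -1 < ε + k := by linarith [k.cast_nonneg (α := ℝ)]
    have hb : rbinom (ε + k) k ≠ 0 := (rbinom_pos (by linarith)).ne'
    have hB : rbinom (ε + k + 1) (k + 1) ≠ 0 := (rbinom_pos (by push_cast; linarith)).ne'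
    have hderiv : deriv (f (ε + k)) u =
        (rbinom (ε + k) k)⁻¹ * deriv (binomialDerivSum (ε + k) k (f ε)) u := by
      rw [(ih.eventuallyEq_of_mem (Ioi_mem_nhds hu)).deriv_eq, deriv_const_mul_field']
    have hrec := add_one_mul_f_add_one he hu
    have heuler := binomialDerivSum_euler (ε + k) k
      (fun i _ => differentiableAt_iteratedDeriv_f hε hu i)
    have habs := succ_mul_rbinom_succ_eq_mul_rbinom_sub_one (ε + k + 1) k
    rw [add_sub_cancel_right] at habs
    rw [ih hu, hderiv] at hrec
    field_simp at hrec
    simp only [Nat.cast_succ, ← add_assoc]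
    rw [eq_inv_mul_iff_mul_eq₀ hB]
    refine mul_left_cancel₀ (show (k : ℝ) + 1 ≠ 0 by positivity) ?_
    linear_combination f (ε + k + 1) u * habs + hrec + heuler

theorem stmt18_general (u : ℝ) (hu : 0 ≤ u) (ε : ℝ) (hε : ε ∈ Set.Ioo (-1 : ℝ) (-1/2))
    (j : ℕ) :
    f (ε + j) u =
      (rbinom (ε + j) j)⁻¹ *
        ∑ i ∈ Finset.range (j + 1),
          rbinom (ε + j - 1) (j - i) * (u ^ i / (Nat.factorial i : ℝ)) *
            iteratedDeriv i (f ε) u := by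
  rcases hu.eq_or_lt with rfl | hu
  · rw [f_apply_zero, eq_comm, mul_eq_zero]
    refine Or.inr (sum_eq_zero fun i _ => ?_)
    rcases i with _ | i <;> simp [f_apply_zero]
  · simpa [binomialDerivSum, taylorTerm, mul_assoc] using eqOn_f_add_nat hε.1 j hu

theorem stmt18 (u : ℝ) (hu : 0 ≤ u) (ε : ℝ) (hε : ε ∈ Set.Ioo (-1 : ℝ) (-1/2))
    (j : ℕ) (hj : 1 ≤ j) :
    f (ε + j) u =
      (rbinom (ε + j) j)⁻¹ *
        ∑ i ∈ Finset.range (j + 1),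
          rbinom (ε + j - 1) (j - i) * (u ^ i / (Nat.factorial i : ℝ)) *
            iteratedDeriv i (f ε) u :=
  stmt18_general u hu ε hε j
end

section
/- For every real u > 0 and ε ∈ (-1, -1/2), with f_ε(u) = (1/Γ(ε+1)) ∫₀^∞ x^{ε-1} e^{-x} ln(xu+1) dx, the recurrence f_{ε+1}(u) = (ε/(ε+1)) f_ε(u) + (1/(ε+1)) u f_ε'(u) holds. -/
/-!
Differentiating under the integral sign gives `Γ(ε+1) f_ε'(u) = ∫₀^∞ x^ε e^{-x} / (xu+1) dx`.
Integrating `x^ε e^{-x} log(xu+1)` by parts, with `(x^ε)' = ε x^{ε-1}` and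
`(log(xu+1))' = u / (xu+1)`, expresses `Γ(ε+2) f_{ε+1}(u)` through `ε Γ(ε+1) f_ε(u)` and that
integral; the boundary terms vanish because `|x^ε e^{-x} log(xu+1)| ≤ u x^{ε+1} e^{-x}`.
Finally `Γ(ε+2) = (ε+1) Γ(ε+1)`.
-/

open MeasureTheory Real

open Set Filter Topology

namespace LogGammaTransform

noncomputable def logMoment (a u : ℝ) : ℝ :=
  ∫ x in Ioi (0 : ℝ), x ^ a * exp (-x) * log (x * u + 1)

noncomputable def stieltjesMoment (a u : ℝ) : ℝ :=
  ∫ x in Ioi (0 : ℝ), x ^ a * exp (-x) / (x * u + 1)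

lemma f_eq_logMoment (e u : ℝ) : f e u = (1 / Gamma (e + 1)) * logMoment (e - 1) u := rfl

lemma norm_log_mul_add_one_le {x u : ℝ} (hx : 0 ≤ x) (hu : 0 ≤ u) :
    ‖log (x * u + 1)‖ ≤ x * u := by
  have hxu : 0 ≤ x * u := mul_nonneg hx hu
  rw [norm_of_nonneg (log_nonneg (by linarith))]
  linarith [log_le_sub_one_of_pos (by linarith : 0 < x * u + 1)]

lemma norm_rpow_mul_exp_neg_mul_log_le (a : ℝ) {x u : ℝ} (hx : 0 ≤ x) (hu : 0 ≤ u) :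
    ‖x ^ a * exp (-x) * log (x * u + 1)‖ ≤ u * (x ^ (a + 1) * exp (-x)) := by
  rcases hx.eq_or_lt with rfl | hx
  · simp only [zero_mul, zero_add, log_one, mul_zero, norm_zero]
    positivity
  calc ‖x ^ a * exp (-x) * log (x * u + 1)‖
      = x ^ a * exp (-x) * ‖log (x * u + 1)‖ := by
        rw [norm_mul, norm_of_nonneg (by positivity : 0 ≤ x ^ a * exp (-x))]
    _ ≤ x ^ a * exp (-x) * (x * u) := by
        gcongr
        exact norm_log_mul_add_one_le hx.le hu
    _ = u * (x ^ (a + 1) * exp (-x)) := by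
        rw [rpow_add_one hx.ne']
        ring

lemma norm_rpow_mul_exp_neg_div_le (a : ℝ) {x u : ℝ} (hx : 0 ≤ x) (hu : 0 ≤ u) :
    ‖x ^ a * exp (-x) / (x * u + 1)‖ ≤ exp (-x) * x ^ a := by
  have hnum : 0 ≤ x ^ a * exp (-x) := by positivity
  have hden : 1 ≤ x * u + 1 := by nlinarith
  rw [norm_of_nonneg (by positivity), mul_comm (exp _)]
  exact div_le_self hnum hden

lemma integrableOn_rpow_mul_exp_neg_mul_log {a : ℝ} (ha : -2 < a) {u : ℝ} (hu : 0 ≤ u) :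
    IntegrableOn (fun x : ℝ => x ^ a * exp (-x) * log (x * u + 1)) (Ioi 0) := by
  have hG := (GammaIntegral_convergent (by linarith : (0 : ℝ) < a + 2)).const_mul u
  refine hG.mono' (by fun_prop : Measurable _).aestronglyMeasurable ?_
  filter_upwards [ae_restrict_mem measurableSet_Ioi] with x (hx : 0 < x)
  refine (norm_rpow_mul_exp_neg_mul_log_le a hx.le hu).trans_eq ?_
  rw [show a + 2 - 1 = a + 1 by ring]
  ring

lemma integrableOn_rpow_mul_exp_neg_div {a : ℝ} (ha : -1 < a) {u : ℝ} (hu : 0 ≤ u) :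
    IntegrableOn (fun x : ℝ => x ^ a * exp (-x) / (x * u + 1)) (Ioi 0) := by
  have hG := GammaIntegral_convergent (by linarith : (0 : ℝ) < a + 1)
  rw [add_sub_cancel_right] at hG
  refine hG.mono' (by fun_prop : Measurable _).aestronglyMeasurable ?_
  filter_upwards [ae_restrict_mem measurableSet_Ioi] with x (hx : 0 < x)
  exact norm_rpow_mul_exp_neg_div_le a hx.le hu

lemma hasDerivAt_logMoment {ε : ℝ} (hε : -1 < ε) {u : ℝ} (hu : 0 < u) :
    HasDerivAt (logMoment (ε - 1)) (stieltjesMoment ε u) u := by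
  have hpos : ∀ v ∈ Metric.ball u (u / 2), 0 < v := fun v hv => by
    linarith [(abs_lt.1 (mem_ball_iff_norm.1 hv)).1]
  have hG := GammaIntegral_convergent (by linarith : (0 : ℝ) < ε + 1)
  rw [add_sub_cancel_right] at hG
  refine (hasDerivAt_integral_of_dominated_loc_of_deriv_le
    (F := fun v x => x ^ (ε - 1) * exp (-x) * log (x * v + 1))
    (F' := fun v x => x ^ ε * exp (-x) / (x * v + 1))
    (Metric.ball_mem_nhds u (half_pos hu))
    (Eventually.of_forall fun v => (by fun_prop : Measurable _).aestronglyMeasurable)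
    (integrableOn_rpow_mul_exp_neg_mul_log (by linarith) hu.le)
    (by fun_prop : Measurable _).aestronglyMeasurable ?_ hG ?_).2
  · filter_upwards [ae_restrict_mem measurableSet_Ioi] with x (hx : 0 < x) v hv
    exact norm_rpow_mul_exp_neg_div_le ε hx.le (hpos v hv).le
  · filter_upwards [ae_restrict_mem measurableSet_Ioi] with x (hx : 0 < x) v hv
    have hxv : 0 < x * v + 1 := by nlinarith [hpos v hv]
    have hlog : HasDerivAt (fun w => log (x * w + 1)) (x / (x * v + 1)) v := by
      simpa using (((hasDerivAt_id v).const_mul x).add_const 1).log hxv.ne'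
    refine (hlog.const_mul (x ^ (ε - 1) * exp (-x))).congr_deriv ?_
    rw [rpow_sub_one hx.ne']
    field_simp

lemma hasDerivAt_rpow_mul_exp_neg_mul_log (ε : ℝ) {u x : ℝ} (hu : 0 ≤ u) (hx : 0 < x) :
    HasDerivAt (fun y => y ^ ε * exp (-y) * log (y * u + 1))
      (ε * (x ^ (ε - 1) * exp (-x) * log (x * u + 1)) - x ^ ε * exp (-x) * log (x * u + 1)
        + u * (x ^ ε * exp (-x) / (x * u + 1))) x := by
  have hpow : HasDerivAt (fun y => y ^ ε) (ε * x ^ (ε - 1)) x := by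
    simpa using hasDerivAt_rpow_const (p := ε) (Or.inl hx.ne')
  have hexp : HasDerivAt (fun y => exp (-y)) (-exp (-x)) x := by
    simpa using (hasDerivAt_neg x).exp
  have hlin : HasDerivAt (fun y => y * u + 1) u x := by
    simpa using ((hasDerivAt_id x).mul_const u).add_const 1
  have hlog := hlin.log (by nlinarith : 0 < x * u + 1).ne'
  refine ((hpow.mul hexp).mul hlog).congr_deriv ?_
  simp only [Pi.mul_apply]
  ring

lemma logMoment_recurrence {ε : ℝ} (hε : -1 < ε) {u : ℝ} (hu : 0 ≤ u) :
    logMoment ε u = ε * logMoment (ε - 1) u + u * stieltjesMoment ε u := by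
  set g : ℝ → ℝ := fun x => x ^ ε * exp (-x) * log (x * u + 1)
  have hbound : ∀ x, 0 ≤ x → ‖g x‖ ≤ u * (x ^ (ε + 1) * exp (-x)) := fun x hx =>
    norm_rpow_mul_exp_neg_mul_log_le ε hx hu
  have hg0 : g 0 = 0 := by simp [g]
  have hzero : ContinuousWithinAt g (Ici 0) 0 := by
    have hmaj : Tendsto (fun x : ℝ => u * (x ^ (ε + 1) * exp (-x))) (𝓝[Ici 0] 0) (𝓝 0) := by
      have hc : ContinuousAt (fun x : ℝ => u * (x ^ (ε + 1) * exp (-x))) 0 :=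
        continuousAt_const.mul
          ((continuousAt_rpow_const 0 (ε + 1) (Or.inr (by linarith))).mul (by fun_prop))
      simpa [zero_rpow (by linarith : ε + 1 ≠ 0)] using hc.tendsto.mono_left nhdsWithin_le_nhds
    rw [ContinuousWithinAt, hg0]
    exact squeeze_zero_norm' (eventually_nhdsWithin_of_forall hbound) hmaj
  have hinfty : Tendsto g atTop (𝓝 0) := by
    have hmaj : Tendsto (fun x : ℝ => u * (x ^ (ε + 1) * exp (-x))) atTop (𝓝 0) := by
      simpa using (tendsto_rpow_mul_exp_neg_mul_atTop_nhds_zero (ε + 1) 1 one_pos).const_mul u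
    exact squeeze_zero_norm' ((eventually_ge_atTop 0).mono hbound) hmaj
  have hI1 := (integrableOn_rpow_mul_exp_neg_mul_log (by linarith : -2 < ε - 1) hu).const_mul ε
  have hI2 := integrableOn_rpow_mul_exp_neg_mul_log (by linarith : -2 < ε) hu
  have hI3 := (integrableOn_rpow_mul_exp_neg_div hε hu).const_mul u
  have hI12 : IntegrableOn (fun x => ε * (x ^ (ε - 1) * exp (-x) * log (x * u + 1))
      - x ^ ε * exp (-x) * log (x * u + 1)) (Ioi 0) := hI1.sub hI2
  have hFTC := integral_Ioi_of_hasDerivAt_of_tendsto hzero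
    (fun x hx => hasDerivAt_rpow_mul_exp_neg_mul_log ε hu hx) (hI12.add hI3) hinfty
  rw [integral_add hI12 hI3, integral_sub hI1 hI2, integral_const_mul,
    integral_const_mul, hg0, sub_zero] at hFTC
  simp only [logMoment, stieltjesMoment]
  linarith

end LogGammaTransform

open LogGammaTransform in
theorem stmt19 (u : ℝ) (hu : 0 < u) (ε : ℝ) (hε : ε ∈ Set.Ioo (-1 : ℝ) (-1/2)) :
    f (ε + 1) u = (ε / (ε + 1)) * f ε u + (1 / (ε + 1)) * u * deriv (f ε) u := by
  have hε1 : 0 < ε + 1 := by linarith [hε.1]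
  have hΓ : Gamma (ε + 1) ≠ 0 := (Gamma_pos_of_pos hε1).ne'
  have hderiv : deriv (f ε) u = (1 / Gamma (ε + 1)) * stieltjesMoment ε u :=
    ((hasDerivAt_logMoment hε.1 hu).const_mul _).deriv
  rw [hderiv, f_eq_logMoment, f_eq_logMoment, add_sub_cancel_right, Gamma_add_one hε1.ne',
    logMoment_recurrence hε.1 hu.le]
  field_simp
end
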